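/- arXiv:math/0403293 — 2 statements merged into one kernel-verified Lean document; each statement's English description precedes it below -/
import Mathlib

section
/- Let G ⊆ E be a set which is closed (in the topology generated by the seminorms ‖·‖_{τ,s}), bounded (there exist constants M_{τ,s} with ‖u‖_{τ,s} ≤ M_{τ,s} for all u ∈ G and all (τ,s) ∈ Δ), and uniformly continuous (for every ε > 0 and every (τ,s) ∈ Δ there is δ > 0 such that t₁, t₂ ∈ [0,τ], |t₁ − t₂| < δ implies sup_{u∈G} ‖u(t₁) − u(t₂)‖_s < ε). Then G is compact in E. -/
/-!
An Arzelà–Ascoli argument. The compact embeddings `E_{s'} ↪ E_s` make every bounded sequence of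
values `u(t)` Cauchy in `E_s` along a subsequence, so a diagonal extraction yields a subsequence
that is Cauchy at every rational point `(t, s) ∈ Δ`. Monotonicity of the norms in `s` passes this
to every real level, and uniform equicontinuity on the compact interval `[0, τ]` upgrades
convergence on a dense set of times to uniform Cauchyness. Completeness of the levels produces a
limit `v`; it lies in `E` as a uniform limit of continuous functions, and in `G` because `G` is
closed.
-/

open Filter Topology Set

/-- The triangle `Δ = {(τ,s) : τ > 0, 0 < s < 1, 1 - s - τa > 0}`. -/
def InDelta (a τ s : ℝ) : Prop :=
  0 < τ ∧ 0 < s ∧ s < 1 ∧ 1 - s - τ * a > 0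

/-- Membership in the space `E = ⋂_{(τ,s)∈Δ} C([0,τ], E_s)`: for every
`(τ,s) ∈ Δ` the function takes values in `E_s` on `[0,τ]` and is continuous
there with respect to the norm `N s`. -/
def MemScaleSpace {X : Type*} [NormedAddCommGroup X] [NormedSpace ℝ X]
    (E : ℝ → Submodule ℝ X) (N : ℝ → X → ℝ) (a : ℝ) (u : ℝ → X) : Prop :=
  ∀ τ s : ℝ, InDelta a τ s →
    (∀ t ∈ Icc (0:ℝ) τ, u t ∈ E s) ∧
    (∀ t ∈ Icc (0:ℝ) τ, ∀ ε > (0:ℝ), ∃ δ > (0:ℝ), ∀ t' ∈ Icc (0:ℝ) τ,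
      |t' - t| < δ → N s (u t' - u t) < ε)

/-- Convergence `uₖ → v` in `E`, i.e. with respect to every seminorm
`‖u‖_{τ,s} = max_{0≤t≤τ} N s (u t)`, `(τ,s) ∈ Δ`. -/
def TendstoScaleSpace {X : Type*} [NormedAddCommGroup X] [NormedSpace ℝ X]
    (N : ℝ → X → ℝ) (a : ℝ) (u : ℕ → ℝ → X) (v : ℝ → X) : Prop :=
  ∀ τ s : ℝ, InDelta a τ s → ∀ ε > (0:ℝ), ∃ K₀ : ℕ, ∀ k ≥ K₀,
    ∀ t ∈ Icc (0:ℝ) τ, N s (u k t - v t) < ε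

section Seminorm

variable {X : Type*} [AddCommGroup X] [Module ℝ X] {F : Submodule ℝ X} {p : X → ℝ}

structure IsSeminormOn (F : Submodule ℝ X) (p : X → ℝ) : Prop where
  add_le : ∀ x ∈ F, ∀ y ∈ F, p (x + y) ≤ p x + p y
  smul_eq : ∀ (c : ℝ), ∀ x ∈ F, p (c • x) = |c| * p x

theorem IsSeminormOn.sub_comm (hp : IsSeminormOn F p) {x y : X} (hx : x ∈ F) (hy : y ∈ F) :
    p (x - y) = p (y - x) := by
  simpa using hp.smul_eq (-1) (y - x) (sub_mem hy hx)

theorem IsSeminormOn.sub_le_sub_add_sub (hp : IsSeminormOn F p) {x y z : X} (hx : x ∈ F)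
    (hy : y ∈ F) (hz : z ∈ F) : p (x - z) ≤ p (x - y) + p (y - z) := by
  simpa using hp.add_le _ (sub_mem hx hy) _ (sub_mem hy hz)

end Seminorm

section Cauchy

variable {α : Type*}

def CauchySeqWith (d : α → α → ℝ) (x : ℕ → α) : Prop :=
  ∀ ε > (0:ℝ), ∃ K : ℕ, ∀ m ≥ K, ∀ n ≥ K, d (x m) (x n) < ε

theorem cauchySeqWith_iff_eventually {d : α → α → ℝ} {x : ℕ → α} :
    CauchySeqWith d x ↔ ∀ ε > (0:ℝ), ∀ᶠ mn : ℕ × ℕ in atTop, d (x mn.1) (x mn.2) < ε := by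
  simp only [CauchySeqWith, eventually_atTop_prod_self']

theorem exists_strictMono_forall_cauchySeqWith_nat {A : Set α} (d : ℕ → α → α → ℝ)
    (h : ∀ i (x : ℕ → α), (∀ k, x k ∈ A) →
      ∃ φ : ℕ → ℕ, StrictMono φ ∧ CauchySeqWith (d i) (x ∘ φ))
    {x : ℕ → α} (hx : ∀ k, x k ∈ A) :
    ∃ φ : ℕ → ℕ, StrictMono φ ∧ ∀ i, CauchySeqWith (d i) (x ∘ φ) := by
  choose! ψ hψ hψd using h
  -- `nested n = ψ 0 ∘ ψ 1 ∘ ⋯ ∘ ψ n`, each factor extracted from the previous subsequence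
  let nested : ℕ → ℕ → ℕ := fun n =>
    Nat.rec (ψ 0 x) (fun n φ => φ ∘ ψ (n + 1) (x ∘ φ)) n
  have hmono : ∀ n, StrictMono (nested n) := by
    intro n
    induction n with
    | zero => exact hψ 0 x hx
    | succ n ih => exact ih.comp (hψ (n + 1) _ fun k => hx _)
  have hcauchy : ∀ n, CauchySeqWith (d n) (x ∘ nested n) := by
    intro n
    cases n with
    | zero => exact hψd 0 x hx
    | succ n => exact hψd (n + 1) _ fun k => hx _
  have hfactor : ∀ n m, n ≤ m → ∃ σ : ℕ → ℕ, StrictMono σ ∧ nested m = nested n ∘ σ := by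
    intro n m hnm
    induction m, hnm using Nat.le_induction with
    | base => exact ⟨id, strictMono_id, rfl⟩
    | succ m _ ih =>
      obtain ⟨σ, hσ, hσeq⟩ := ih
      exact ⟨σ ∘ ψ (m + 1) (x ∘ nested m), hσ.comp (hψ (m + 1) _ fun k => hx _),
        by rw [← Function.comp_assoc, ← hσeq]⟩
  refine ⟨fun k => nested k k, strictMono_nat_of_lt_succ fun k => ?_, fun i ε hε => ?_⟩
  · calc nested k k < nested k (k + 1) := hmono k k.lt_succ_self
      _ ≤ nested k (ψ (k + 1) (x ∘ nested k) (k + 1)) :=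
        (hmono k).monotone (hψ (k + 1) _ fun j => hx _).le_apply
  · obtain ⟨K, hK⟩ := hcauchy i ε hε
    have htail : ∀ k ≥ i, ∃ j ≥ k, nested k k = nested i j := fun k hk => by
      obtain ⟨σ, hσ, hσeq⟩ := hfactor i k hk
      exact ⟨σ k, hσ.le_apply, congrFun hσeq k⟩
    refine ⟨max i K, fun m hm n hn => ?_⟩
    obtain ⟨j, hj, hjeq⟩ := htail m (le_of_max_le_left hm)
    obtain ⟨j', hj', hjeq'⟩ := htail n (le_of_max_le_left hn)
    simpa only [Function.comp_apply, hjeq, hjeq'] using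
      hK j ((le_of_max_le_right hm).trans hj) j' ((le_of_max_le_right hn).trans hj')

theorem exists_strictMono_forall_cauchySeqWith {ι : Type*} [Countable ι] {A : Set α}
    (d : ι → α → α → ℝ)
    (h : ∀ i (x : ℕ → α), (∀ k, x k ∈ A) →
      ∃ φ : ℕ → ℕ, StrictMono φ ∧ CauchySeqWith (d i) (x ∘ φ))
    {x : ℕ → α} (hx : ∀ k, x k ∈ A) :
    ∃ φ : ℕ → ℕ, StrictMono φ ∧ ∀ i, CauchySeqWith (d i) (x ∘ φ) := by
  cases isEmpty_or_nonempty ι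
  · exact ⟨id, strictMono_id, fun i => isEmptyElim i⟩
  obtain ⟨e, he⟩ := exists_surjective_nat ι
  obtain ⟨φ, hφ, hcauchy⟩ :=
    exists_strictMono_forall_cauchySeqWith_nat (d ∘ e) (fun n => h (e n)) hx
  exact ⟨φ, hφ, he.forall.2 hcauchy⟩

end Cauchy

section Uniform

variable {X α : Type*} [AddCommGroup X] {p : X → ℝ}

def UniformCauchySeqOnWith (p : X → ℝ) (f : ℕ → α → X) (S : Set α) : Prop :=
  ∀ ε > (0:ℝ), ∃ K : ℕ, ∀ m ≥ K, ∀ n ≥ K, ∀ t ∈ S, p (f m t - f n t) < ε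

def TendstoUniformlyOnWith (p : X → ℝ) (f : ℕ → α → X) (v : α → X) (S : Set α) : Prop :=
  ∀ ε > (0:ℝ), ∃ K : ℕ, ∀ k ≥ K, ∀ t ∈ S, p (f k t - v t) < ε

def ContinuousOnWith [PseudoMetricSpace α] (p : X → ℝ) (v : α → X) (S : Set α) : Prop :=
  ∀ t ∈ S, ∀ ε > (0:ℝ), ∃ δ > (0:ℝ), ∀ t' ∈ S, dist t' t < δ → p (v t' - v t) < ε

theorem UniformCauchySeqOnWith.cauchySeqWith_apply {f : ℕ → α → X} {S : Set α}
    (hc : UniformCauchySeqOnWith p f S) {t : α} (ht : t ∈ S) :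
    CauchySeqWith (fun y z => p (y - z)) fun k => f k t :=
  fun ε hε => (hc ε hε).imp fun _ hK m hm n hn => hK m hm n hn t ht

variable [Module ℝ X] {F : Submodule ℝ X}

theorem IsSeminormOn.cauchySeqWith_of_tendsto (hp : IsSeminormOn F p) {x : ℕ → X} {l : X}
    (hx : ∀ k, x k ∈ F) (hl : l ∈ F) (h : Tendsto (fun k => p (x k - l)) atTop (𝓝 0)) :
    CauchySeqWith (fun y z => p (y - z)) x := by
  intro ε hε
  obtain ⟨K, hK⟩ := eventually_atTop.1 (h.eventually (gt_mem_nhds (half_pos hε)))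
  refine ⟨K, fun m hm n hn => ?_⟩
  calc p (x m - x n) ≤ p (x m - l) + p (l - x n) := hp.sub_le_sub_add_sub (hx m) hl (hx n)
    _ = p (x m - l) + p (x n - l) := by rw [hp.sub_comm hl (hx n)]
    _ < ε / 2 + ε / 2 := add_lt_add (hK m hm) (hK n hn)
    _ = ε := add_halves ε

theorem IsSeminormOn.uniformCauchySeqOnWith_of_dense [PseudoMetricSpace α] (hp : IsSeminormOn F p)
    {S D : Set α} (hS : IsCompact S) (hDS : D ⊆ S) (hSD : S ⊆ closure D)
    {f : ℕ → α → X} (hf : ∀ k, ∀ t ∈ S, f k t ∈ F)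
    (hequi : ∀ ε > (0:ℝ), ∃ δ > (0:ℝ), ∀ t₁ ∈ S, ∀ t₂ ∈ S, dist t₁ t₂ < δ →
      ∀ k, p (f k t₁ - f k t₂) < ε)
    (hD : ∀ t ∈ D, CauchySeqWith (fun y z => p (y - z)) fun k => f k t) :
    UniformCauchySeqOnWith p f S := by
  intro ε hε
  obtain ⟨δ, hδ, hfδ⟩ := hequi (ε / 3) (by positivity)
  obtain ⟨D', hD'D, hD'fin, hcover⟩ : ∃ D' ⊆ D, D'.Finite ∧ S ⊆ ⋃ t ∈ D', Metric.ball t δ := by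
    refine hS.elim_finite_subcover_image (fun _ _ => Metric.isOpen_ball) fun t ht => ?_
    obtain ⟨t', ht', hdist⟩ := Metric.mem_closure_iff.1 (hSD ht) δ hδ
    exact mem_biUnion ht' hdist
  have hnet : ∀ᶠ mn : ℕ × ℕ in atTop, ∀ t' ∈ D', p (f mn.1 t' - f mn.2 t') < ε / 3 :=
    (eventually_all_finite hD'fin).2 fun t' ht' =>
      cauchySeqWith_iff_eventually.1 (hD t' (hD'D ht')) _ (by positivity)
  obtain ⟨K, hK⟩ := eventually_atTop_prod_self'.1 hnet
  refine ⟨K, fun m hm n hn t ht => ?_⟩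
  obtain ⟨t', ht', htt'⟩ := mem_iUnion₂.1 (hcover ht)
  have ht'S := hDS (hD'D ht')
  calc p (f m t - f n t)
      ≤ p (f m t - f m t') + p (f m t' - f n t) :=
        hp.sub_le_sub_add_sub (hf m t ht) (hf m t' ht'S) (hf n t ht)
    _ ≤ p (f m t - f m t') + (p (f m t' - f n t') + p (f n t' - f n t)) := by
        gcongr
        exact hp.sub_le_sub_add_sub (hf m t' ht'S) (hf n t' ht'S) (hf n t ht)
    _ < ε / 3 + (ε / 3 + ε / 3) := by
        gcongr
        · exact hfδ t ht t' ht'S htt' m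
        · exact hK m hm n hn t' ht'
        · exact hfδ t' ht'S t ht (by rwa [dist_comm]) n
    _ = ε := by ring

theorem UniformCauchySeqOnWith.tendstoUniformlyOnWith (hp : IsSeminormOn F p)
    {f : ℕ → α → X} {v : α → X} {S : Set α} (hc : UniformCauchySeqOnWith p f S)
    (hf : ∀ k, ∀ t ∈ S, f k t ∈ F) (hv : ∀ t ∈ S, v t ∈ F)
    (hlim : ∀ t ∈ S, Tendsto (fun k => p (f k t - v t)) atTop (𝓝 0)) :
    TendstoUniformlyOnWith p f v S := by
  intro ε hε
  obtain ⟨K, hK⟩ := hc (ε / 2) (half_pos hε)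
  refine ⟨K, fun k hk t ht => ?_⟩
  obtain ⟨m, hm, hmv⟩ :=
    ((hlim t ht).eventually (gt_mem_nhds (half_pos hε))).and (eventually_ge_atTop K) |>.exists
  calc p (f k t - v t) ≤ p (f k t - f m t) + p (f m t - v t) :=
        hp.sub_le_sub_add_sub (hf k t ht) (hf m t ht) (hv t ht)
    _ < ε / 2 + ε / 2 := add_lt_add (hK k hk m hmv t ht) hm
    _ = ε := add_halves ε

theorem TendstoUniformlyOnWith.continuousOnWith [PseudoMetricSpace α] (hp : IsSeminormOn F p)
    {f : ℕ → α → X} {v : α → X} {S : Set α} (h : TendstoUniformlyOnWith p f v S)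
    (hf : ∀ k, ∀ t ∈ S, f k t ∈ F) (hv : ∀ t ∈ S, v t ∈ F)
    (hcont : ∀ k, ContinuousOnWith p (f k) S) : ContinuousOnWith p v S := by
  intro t ht ε hε
  obtain ⟨K, hK⟩ := h (ε / 3) (by positivity)
  obtain ⟨δ, hδ, hKδ⟩ := hcont K t ht (ε / 3) (by positivity)
  refine ⟨δ, hδ, fun t' ht' hdist => ?_⟩
  calc p (v t' - v t)
      ≤ p (v t' - f K t') + p (f K t' - v t) :=
        hp.sub_le_sub_add_sub (hv t' ht') (hf K t' ht') (hv t ht)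
    _ ≤ p (v t' - f K t') + (p (f K t' - f K t) + p (f K t - v t)) := by
        gcongr
        exact hp.sub_le_sub_add_sub (hf K t' ht') (hf K t ht) (hv t ht)
    _ < ε / 3 + (ε / 3 + ε / 3) := by
        rw [hp.sub_comm (hv t' ht') (hf K t' ht')]
        gcongr
        · exact hK K le_rfl t' ht'
        · exact hKδ t' ht' hdist
        · exact hK K le_rfl t ht
    _ = ε := by ring

end Uniform

theorem InDelta.exists_rat_gt {a τ s : ℝ} (h : InDelta a τ s) (ha : 0 ≤ a) :
    ∃ q : ℚ, s < q ∧ InDelta a τ q := by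
  obtain ⟨hτ, hs, -, hgap⟩ := h
  obtain ⟨q, hsq, hq⟩ := exists_rat_btwn (show s < 1 - τ * a by linarith)
  exact ⟨q, hsq, hτ, hs.trans hsq, by linarith [mul_nonneg hτ.le ha], by linarith⟩

theorem InDelta.of_le_left {a τ s t : ℝ} (h : InDelta a τ s) (ha : 0 ≤ a) (ht : 0 < t)
    (htτ : t ≤ τ) : InDelta a t s :=
  ⟨ht, h.2.1, h.2.2.1, by linarith [h.2.2.2, mul_le_mul_of_nonneg_right htτ ha]⟩

theorem Icc_subset_closure_Ioo_inter_range_ratCast {a b : ℝ} (hab : a ≠ b) :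
    Icc a b ⊆ closure (Ioo a b ∩ range ((↑) : ℚ → ℝ)) := by
  rw [← closure_Ioo hab]
  exact closure_minimal (Rat.denseRange_cast.open_subset_closure_inter isOpen_Ioo)
    isClosed_closure

section Scale

variable {X : Type*} [NormedAddCommGroup X] [NormedSpace ℝ X]

theorem tendsto_limUnder_of_cauchySeqWith {F : Submodule ℝ X} {p : X → ℝ}
    (hnorm : ∀ x ∈ F, ‖x‖ ≤ p x)
    (hcomplete : ∀ u : ℕ → X, (∀ k, u k ∈ F) → CauchySeqWith (fun y z => p (y - z)) u →
      ∃ l ∈ F, Tendsto (fun k => p (u k - l)) atTop (𝓝 0))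
    {x : ℕ → X} (hx : ∀ k, x k ∈ F) (hc : CauchySeqWith (fun y z => p (y - z)) x) :
    limUnder atTop x ∈ F ∧ Tendsto (fun k => p (x k - limUnder atTop x)) atTop (𝓝 0) := by
  obtain ⟨l, hl, hlim⟩ := hcomplete x hx hc
  have hX : Tendsto x atTop (𝓝 l) := tendsto_iff_norm_sub_tendsto_zero.2 <|
    squeeze_zero (fun _ => norm_nonneg _) (fun k => hnorm _ (sub_mem (hx k) hl)) hlim
  rw [hX.limUnder_eq]
  exact ⟨hl, hlim⟩

structure IsCompactScale (E : ℝ → Submodule ℝ X) (N : ℝ → X → ℝ) : Prop where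
  mono : ∀ s s' : ℝ, 0 < s → s < s' → s' < 1 → E s' ≤ E s
  norm_mono : ∀ s s' : ℝ, 0 < s → s < s' → s' < 1 → ∀ x ∈ E s', N s x ≤ N s' x
  seminorm : ∀ s : ℝ, 0 < s → s < 1 → IsSeminormOn (E s) (N s)
  norm_le : ∀ s : ℝ, 0 < s → s < 1 → ∀ x ∈ E s, ‖x‖ ≤ N s x
  complete : ∀ s : ℝ, 0 < s → s < 1 → ∀ u : ℕ → X, (∀ k, u k ∈ E s) →
    CauchySeqWith (fun x y => N s (x - y)) u →
    ∃ l ∈ E s, Tendsto (fun k => N s (u k - l)) atTop (𝓝 0)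
  compact : ∀ s s' : ℝ, 0 < s → s < s' → s' < 1 → ∀ (u : ℕ → X) (C : ℝ),
    (∀ k, u k ∈ E s') → (∀ k, N s' (u k) ≤ C) →
    ∃ φ : ℕ → ℕ, StrictMono φ ∧ ∃ l ∈ E s, Tendsto (fun k => N s (u (φ k) - l)) atTop (𝓝 0)

namespace IsCompactScale

variable {E : ℝ → Submodule ℝ X} {N : ℝ → X → ℝ} {a : ℝ}

theorem exists_subseq_cauchySeqWith (hE : IsCompactScale E N) {s s' : ℝ} (hs : 0 < s)
    (hss' : s < s') (hs' : s' < 1) {x : ℕ → X} {C : ℝ} (hx : ∀ k, x k ∈ E s')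
    (hC : ∀ k, N s' (x k) ≤ C) :
    ∃ φ : ℕ → ℕ, StrictMono φ ∧ CauchySeqWith (fun y z => N s (y - z)) (x ∘ φ) := by
  obtain ⟨φ, hφ, l, hl, hlim⟩ := hE.compact s s' hs hss' hs' x C hx hC
  exact ⟨φ, hφ, (hE.seminorm s hs (hss'.trans hs')).cauchySeqWith_of_tendsto
    (fun k => hE.mono s s' hs hss' hs' (hx _)) hl hlim⟩

theorem exists_subseq_cauchySeqWith_rat (hE : IsCompactScale E N) (ha : 0 ≤ a)
    {G : Set (ℝ → X)} (hG_sub : ∀ u ∈ G, MemScaleSpace E N a u)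
    (hG_bdd : ∀ τ s : ℝ, InDelta a τ s → ∃ M : ℝ, ∀ u ∈ G, ∀ t ∈ Icc (0:ℝ) τ, N s (u t) ≤ M)
    {u : ℕ → ℝ → X} (hu : ∀ k, u k ∈ G) :
    ∃ φ : ℕ → ℕ, StrictMono φ ∧ ∀ t q : ℚ, InDelta a t q →
      CauchySeqWith (fun y z => N q (y - z)) fun k => u (φ k) t := by
  have hpoint : ∀ (tq : {tq : ℚ × ℚ // InDelta a tq.1 tq.2}) (y : ℕ → ℝ → X), (∀ k, y k ∈ G) →
      ∃ φ : ℕ → ℕ, StrictMono φ ∧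
        CauchySeqWith (fun f g => N tq.1.2 (f tq.1.1 - g tq.1.1)) (y ∘ φ) := by
    rintro ⟨⟨t, q⟩, h⟩ y hy
    obtain ⟨s', hqs', h'⟩ := h.exists_rat_gt ha
    obtain ⟨M, hM⟩ := hG_bdd t s' h'
    have ht : (t : ℝ) ∈ Icc 0 (t : ℝ) := ⟨h.1.le, le_rfl⟩
    exact hE.exists_subseq_cauchySeqWith h.2.1 hqs' h'.2.2.1
      (fun k => (hG_sub _ (hy k) t s' h').1 t ht) (fun k => hM _ (hy k) t ht)
  obtain ⟨φ, hφ, hcauchy⟩ := exists_strictMono_forall_cauchySeqWith _ hpoint hu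
  exact ⟨φ, hφ, fun t q h => hcauchy ⟨(t, q), h⟩⟩

theorem uniformCauchySeqOnWith_of_rat (hE : IsCompactScale E N) (ha : 0 ≤ a) {G : Set (ℝ → X)}
    (hG_sub : ∀ u ∈ G, MemScaleSpace E N a u)
    (hG_unifCont : ∀ ε > (0:ℝ), ∀ τ s : ℝ, InDelta a τ s → ∃ δ > (0:ℝ),
      ∀ t₁ ∈ Icc (0:ℝ) τ, ∀ t₂ ∈ Icc (0:ℝ) τ, |t₁ - t₂| < δ → ∀ u ∈ G, N s (u t₁ - u t₂) < ε)
    {f : ℕ → ℝ → X} (hf : ∀ k, f k ∈ G)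
    (hrat : ∀ t q : ℚ, InDelta a t q → CauchySeqWith (fun y z => N q (y - z)) fun k => f k t)
    {τ s : ℝ} (h : InDelta a τ s) : UniformCauchySeqOnWith (N s) f (Icc 0 τ) := by
  obtain ⟨q, hsq, hq⟩ := h.exists_rat_gt ha
  refine (hE.seminorm s h.2.1 h.2.2.1).uniformCauchySeqOnWith_of_dense isCompact_Icc
    (fun t ht => Ioo_subset_Icc_self ht.1) (Icc_subset_closure_Ioo_inter_range_ratCast h.1.ne)
    (fun k => (hG_sub _ (hf k) τ s h).1) (fun ε hε => ?_) ?_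
  · obtain ⟨δ, hδ, hGδ⟩ := hG_unifCont ε hε τ s h
    exact ⟨δ, hδ, fun t₁ h₁ t₂ h₂ hdist k => hGδ t₁ h₁ t₂ h₂ hdist _ (hf k)⟩
  rintro _ ⟨ht, t, rfl⟩ ε hε
  obtain ⟨K, hK⟩ := hrat t q (hq.of_le_left ha ht.1 ht.2.le) ε hε
  have hmem : ∀ k, f k t ∈ E q := fun k => (hG_sub _ (hf k) τ q hq).1 t (Ioo_subset_Icc_self ht)
  exact ⟨K, fun m hm n hn => (hE.norm_mono s q h.2.1 hsq hq.2.2.1 _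
    (sub_mem (hmem m) (hmem n))).trans_lt (hK m hm n hn)⟩

theorem tendstoUniformlyOnWith_limUnder {α : Type*} (hE : IsCompactScale E N) {s : ℝ}
    (hs : 0 < s) (hs1 : s < 1) {f : ℕ → α → X} {S : Set α} (hf : ∀ k, ∀ t ∈ S, f k t ∈ E s)
    (hc : UniformCauchySeqOnWith (N s) f S) :
    (∀ t ∈ S, limUnder atTop (fun k => f k t) ∈ E s) ∧
      TendstoUniformlyOnWith (N s) f (fun t => limUnder atTop fun k => f k t) S := by
  have hlim := fun t (ht : t ∈ S) => tendsto_limUnder_of_cauchySeqWith (hE.norm_le s hs hs1)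
    (hE.complete s hs hs1) (fun k => hf k t ht) (hc.cauchySeqWith_apply ht)
  exact ⟨fun t ht => (hlim t ht).1, hc.tendstoUniformlyOnWith (hE.seminorm s hs hs1) hf
    (fun t ht => (hlim t ht).1) fun t ht => (hlim t ht).2⟩

end IsCompactScale

end Scale

/-- Compactness is stated sequentially, which is equivalent here: the topology of `E` is generated
by the countably many seminorms `‖·‖_{τ,s}` with `(τ, s) ∈ Δ ∩ ℚ²`. -/
theorem scale_space_closed_bounded_unifCont_compact_general
    {X : Type*} [NormedAddCommGroup X] [NormedSpace ℝ X]
    (E : ℝ → Submodule ℝ X) (N : ℝ → X → ℝ)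
    -- the scale structure
    (hscale_mono : ∀ s s' : ℝ, 0 < s → s < s' → s' < 1 → E s' ≤ E s)
    (hnorm_mono : ∀ s s' : ℝ, 0 < s → s < s' → s' < 1 → ∀ x ∈ E s', N s x ≤ N s' x)
    (hN_add : ∀ s : ℝ, 0 < s → s < 1 → ∀ x ∈ E s, ∀ y ∈ E s,
      N s (x + y) ≤ N s x + N s y)
    (hN_smul : ∀ s : ℝ, 0 < s → s < 1 → ∀ (c : ℝ), ∀ x ∈ E s, N s (c • x) = |c| * N s x)
    (hN_ambient : ∀ s : ℝ, 0 < s → s < 1 → ∀ x ∈ E s, ‖x‖ ≤ N s x)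
    (hcomplete : ∀ s : ℝ, 0 < s → s < 1 → ∀ u : ℕ → X, (∀ k, u k ∈ E s) →
      (∀ ε > (0:ℝ), ∃ K₀ : ℕ, ∀ m ≥ K₀, ∀ n ≥ K₀, N s (u m - u n) < ε) →
      ∃ l ∈ E s, Tendsto (fun k => N s (u k - l)) atTop (𝓝 0))
    (hcompact : ∀ s s' : ℝ, 0 < s → s < s' → s' < 1 → ∀ (u : ℕ → X) (C : ℝ),
      (∀ k, u k ∈ E s') → (∀ k, N s' (u k) ≤ C) →
      ∃ φ : ℕ → ℕ, StrictMono φ ∧ ∃ l ∈ E s,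
        Tendsto (fun k => N s (u (φ k) - l)) atTop (𝓝 0))
    (a : ℝ) (ha : 0 < a)
    (G : Set (ℝ → X)) (hG_sub : ∀ u ∈ G, MemScaleSpace E N a u)
    -- `G` is closed in `E` (sequentially, for the seminorm topology)
    (hG_closed : ∀ u : ℕ → ℝ → X, (∀ k, u k ∈ G) → ∀ v : ℝ → X,
      MemScaleSpace E N a v → TendstoScaleSpace N a u v → v ∈ G)
    -- `G` is bounded: for each `(τ,s) ∈ Δ` there is `M_{τ,s}` with `‖u‖_{τ,s} ≤ M_{τ,s}`
    (hG_bdd : ∀ τ s : ℝ, InDelta a τ s → ∃ Mts : ℝ, ∀ u ∈ G,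
      ∀ t ∈ Icc (0:ℝ) τ, N s (u t) ≤ Mts)
    -- `G` is uniformly continuous
    (hG_unifCont : ∀ ε > (0:ℝ), ∀ τ s : ℝ, InDelta a τ s → ∃ δ > (0:ℝ),
      ∀ t₁ ∈ Icc (0:ℝ) τ, ∀ t₂ ∈ Icc (0:ℝ) τ, |t₁ - t₂| < δ →
        ∀ u ∈ G, N s (u t₁ - u t₂) < ε) :
    -- `G` is (sequentially) compact in `E`
    ∀ u : ℕ → ℝ → X, (∀ k, u k ∈ G) →
      ∃ φ : ℕ → ℕ, StrictMono φ ∧ ∃ v ∈ G, TendstoScaleSpace N a (fun k => u (φ k)) v := by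
  intro u hu
  have hE : IsCompactScale E N := ⟨hscale_mono, hnorm_mono,
    fun s hs hs1 => ⟨hN_add s hs hs1, hN_smul s hs hs1⟩, hN_ambient, hcomplete, hcompact⟩
  obtain ⟨φ, hφ, hrat⟩ := hE.exists_subseq_cauchySeqWith_rat ha.le hG_sub hG_bdd hu
  have hf : ∀ k, u (φ k) ∈ G := fun k => hu (φ k)
  have hf_mem : ∀ k, MemScaleSpace E N a (u (φ k)) := fun k => hG_sub _ (hf k)
  set v : ℝ → X := fun t => limUnder atTop fun k => u (φ k) t
  have hlim : ∀ τ s, InDelta a τ s →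
      (∀ t ∈ Icc (0:ℝ) τ, v t ∈ E s) ∧ TendstoUniformlyOnWith (N s) (u ∘ φ) v (Icc 0 τ) :=
    fun τ s h => hE.tendstoUniformlyOnWith_limUnder h.2.1 h.2.2.1 (fun k => (hf_mem k τ s h).1)
      (hE.uniformCauchySeqOnWith_of_rat ha.le hG_sub hG_unifCont hf hrat h)
  have hconv : TendstoScaleSpace N a (u ∘ φ) v := fun τ s h => (hlim τ s h).2
  have hv : MemScaleSpace E N a v := fun τ s h => ⟨(hlim τ s h).1,
    (hlim τ s h).2.continuousOnWith (hE.seminorm s h.2.1 h.2.2.1)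
      (fun k => (hf_mem k τ s h).1) (hlim τ s h).1 fun k => (hf_mem k τ s h).2⟩
  exact ⟨φ, hφ, v, hG_closed _ hf v hv hconv, hconv⟩

/-- **Compactness criterion in the scale space `E`** (Lemma 3.2 of the paper):
if a closed set `G ⊆ E` is uniformly continuous and bounded, then it is compact
(here: sequentially compact, which is equivalent since the topology of `E` is
generated by a countable dominating family of seminorms).

The scale `{(E_s, N s)}_{0<s<1}` sits inside an ambient Banach space `X`, with
monotone inclusions and norms, complete levels and compact embeddings. -/
theorem scale_space_closed_bounded_unifCont_compact
    {X : Type*} [NormedAddCommGroup X] [NormedSpace ℝ X] [CompleteSpace X]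
    (E : ℝ → Submodule ℝ X) (N : ℝ → X → ℝ)
    -- the scale structure
    (hscale_mono : ∀ s s' : ℝ, 0 < s → s < s' → s' < 1 → E s' ≤ E s)
    (hnorm_mono : ∀ s s' : ℝ, 0 < s → s < s' → s' < 1 → ∀ x ∈ E s', N s x ≤ N s' x)
    (hN_nonneg : ∀ s : ℝ, 0 < s → s < 1 → ∀ x ∈ E s, 0 ≤ N s x)
    (hN_def : ∀ s : ℝ, 0 < s → s < 1 → ∀ x ∈ E s, (N s x = 0 ↔ x = 0))
    (hN_add : ∀ s : ℝ, 0 < s → s < 1 → ∀ x ∈ E s, ∀ y ∈ E s,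
      N s (x + y) ≤ N s x + N s y)
    (hN_smul : ∀ s : ℝ, 0 < s → s < 1 → ∀ (c : ℝ), ∀ x ∈ E s, N s (c • x) = |c| * N s x)
    (hN_ambient : ∀ s : ℝ, 0 < s → s < 1 → ∀ x ∈ E s, ‖x‖ ≤ N s x)
    (hcomplete : ∀ s : ℝ, 0 < s → s < 1 → ∀ u : ℕ → X, (∀ k, u k ∈ E s) →
      (∀ ε > (0:ℝ), ∃ K₀ : ℕ, ∀ m ≥ K₀, ∀ n ≥ K₀, N s (u m - u n) < ε) →
      ∃ l ∈ E s, Tendsto (fun k => N s (u k - l)) atTop (𝓝 0))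
    (hcompact : ∀ s s' : ℝ, 0 < s → s < s' → s' < 1 → ∀ (u : ℕ → X) (C : ℝ),
      (∀ k, u k ∈ E s') → (∀ k, N s' (u k) ≤ C) →
      ∃ φ : ℕ → ℕ, StrictMono φ ∧ ∃ l ∈ E s,
        Tendsto (fun k => N s (u (φ k) - l)) atTop (𝓝 0))
    (a : ℝ) (ha : 0 < a)
    (G : Set (ℝ → X)) (hG_sub : ∀ u ∈ G, MemScaleSpace E N a u)
    -- `G` is closed in `E` (sequentially, for the seminorm topology)
    (hG_closed : ∀ u : ℕ → ℝ → X, (∀ k, u k ∈ G) → ∀ v : ℝ → X,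
      MemScaleSpace E N a v → TendstoScaleSpace N a u v → v ∈ G)
    -- `G` is bounded: for each `(τ,s) ∈ Δ` there is `M_{τ,s}` with `‖u‖_{τ,s} ≤ M_{τ,s}`
    (hG_bdd : ∀ τ s : ℝ, InDelta a τ s → ∃ Mts : ℝ, ∀ u ∈ G,
      ∀ t ∈ Icc (0:ℝ) τ, N s (u t) ≤ Mts)
    -- `G` is uniformly continuous
    (hG_unifCont : ∀ ε > (0:ℝ), ∀ τ s : ℝ, InDelta a τ s → ∃ δ > (0:ℝ),
      ∀ t₁ ∈ Icc (0:ℝ) τ, ∀ t₂ ∈ Icc (0:ℝ) τ, |t₁ - t₂| < δ →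
        ∀ u ∈ G, N s (u t₁ - u t₂) < ε) :
    -- `G` is (sequentially) compact in `E`
    ∀ u : ℕ → ℝ → X, (∀ k, u k ∈ G) →
      ∃ φ : ℕ → ℕ, StrictMono φ ∧ ∃ v ∈ G, TendstoScaleSpace N a (fun k => u (φ k)) v :=
  scale_space_closed_bounded_unifCont_compact_general E N hscale_mono hnorm_mono hN_add hN_smul
    hN_ambient hcomplete hcompact a ha G hG_sub hG_closed hG_bdd hG_unifCont
end

section
/- There exists a sufficiently large constant a > 0 such that the problem u_t = h(t,u), u(0) = 0, has a solution u belonging to the intersection over all pairs (τ,s) with τ > 0, 0 < s < 1, 1 − s − τa > 0 (and τ ≤ T) of the spaces C([0,τ], closed ball of radius R in E_s); equivalently, u is continuous with values in the closed ball of radius R of E_s on [0,τ] for every such (τ,s) and satisfies u(t) = ∫_0^t h(ξ,u(ξ)) dξ (as an identity in E_s) for all such t. -/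
/-!
Tonelli's scheme: for `δ = time / (n + 1)` the delayed equation `u t = ∫₀^{t-δ} h(ξ, u ξ) dξ` is
solved by `n + 1` explicit iterations, and every iterate is `K`-Lipschitz with values in the
`R`-ball of every `E_s`. This uses that the bound on `h` costs no radius as `s' ↓ s`, and that an
integral, being a multiple of an average, lies in the ambient closure of a convex `E_{s'}`-ball,
which compactness of `E_{s'} ↪ E_s` places inside the `E_s`-ball. The same compactness makes these
balls relatively compact in `X`, so Arzelà–Ascoli gives a pointwise convergent subsequence, and
dominated convergence passes to the limit in the equation as `δ → 0`.
-/

open MeasureTheory Filter Topology Set intervalIntegral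
open scoped Interval BoundedContinuousFunction

theorem exists_subseq_tendsto_of_equicontinuous {α X : Type*} [TopologicalSpace α]
    [CompactSpace α] [MetricSpace X] {C : Set X} (hC : IsCompact C) {F : ℕ → α → X}
    (hF : Equicontinuous F) (hFC : ∀ n x, F n x ∈ C) :
    ∃ φ : ℕ → ℕ, StrictMono φ ∧ ∃ u : α → X,
      ∀ x, Tendsto (fun k => F (φ k) x) atTop (𝓝 (u x)) := by
  let G : ℕ → α →ᵇ X := fun n => .mkOfCompact ⟨F n, hF.continuous n⟩
  have hA : IsCompact (closure (range G)) := by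
    refine BoundedContinuousFunction.arzela_ascoli C hC _ ?_ ?_
    · rintro _ x ⟨n, rfl⟩
      exact hFC n x
    · have hcoe : ((↑) : range G → α → X) = F ∘ fun g => g.2.choose := by
        ext g x
        exact congrFun (congrArg DFunLike.coe g.2.choose_spec.symm) x
      rw [hcoe]
      exact hF.comp _
  obtain ⟨g, -, φ, hφ, hGg⟩ := hA.tendsto_subseq fun n => subset_closure (mem_range_self n)
  exact ⟨φ, hφ, g, fun x =>
    (BoundedContinuousFunction.tendsto_iff_tendstoUniformly.1 hGg).tendsto_at x⟩

structure BanachScale (X : Type*) [NormedAddCommGroup X] [NormedSpace ℝ X] where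
  E : ℝ → Submodule ℝ X
  N : ℝ → X → ℝ
  E_anti : ∀ s s' : ℝ, 0 < s → s < s' → s' < 1 → E s' ≤ E s
  N_anti : ∀ s s' : ℝ, 0 < s → s < s' → s' < 1 → ∀ x ∈ E s', N s x ≤ N s' x
  N_add_le : ∀ s : ℝ, 0 < s → s < 1 → ∀ x ∈ E s, ∀ y ∈ E s, N s (x + y) ≤ N s x + N s y
  N_smul : ∀ s : ℝ, 0 < s → s < 1 → ∀ (c : ℝ), ∀ x ∈ E s, N s (c • x) = |c| * N s x
  norm_le_N : ∀ s : ℝ, 0 < s → s < 1 → ∀ x ∈ E s, ‖x‖ ≤ N s x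
  exists_subseq_tendsto_N : ∀ s s' : ℝ, 0 < s → s < s' → s' < 1 → ∀ (u : ℕ → X) (C : ℝ),
    (∀ k, u k ∈ E s') → (∀ k, N s' (u k) ≤ C) →
    ∃ φ : ℕ → ℕ, StrictMono φ ∧ ∃ l ∈ E s, Tendsto (fun k => N s (u (φ k) - l)) atTop (𝓝 0)

namespace BanachScale

variable {X : Type*} [NormedAddCommGroup X] [NormedSpace ℝ X] (S : BanachScale X)
  {s s' r r' : ℝ}

def closedBall (s r : ℝ) : Set X := {x | x ∈ S.E s ∧ S.N s x ≤ r}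

theorem N_zero (hs : 0 < s) (hs1 : s < 1) : S.N s 0 = 0 := by
  simpa using S.N_smul s hs hs1 0 0 (zero_mem _)

theorem N_neg (hs : 0 < s) (hs1 : s < 1) {x : X} (hx : x ∈ S.E s) : S.N s (-x) = S.N s x := by
  simpa using S.N_smul s hs hs1 (-1) x hx

theorem N_nonneg (hs : 0 < s) (hs1 : s < 1) {x : X} (hx : x ∈ S.E s) : 0 ≤ S.N s x := by
  have := S.N_add_le s hs hs1 x hx (-x) (neg_mem hx)
  rw [add_neg_cancel, S.N_zero hs hs1, S.N_neg hs hs1 hx] at this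
  linarith

theorem N_sub_comm (hs : 0 < s) (hs1 : s < 1) {x y : X} (hx : x ∈ S.E s) (hy : y ∈ S.E s) :
    S.N s (x - y) = S.N s (y - x) := by
  rw [← S.N_neg hs hs1 (sub_mem hx hy), neg_sub]

theorem zero_mem_closedBall (hs : 0 < s) (hs1 : s < 1) : (0 : X) ∈ S.closedBall s 0 :=
  ⟨zero_mem _, (S.N_zero hs hs1).le⟩

theorem smul_mem_closedBall (hs : 0 < s) (hs1 : s < 1) (c : ℝ) {x : X}
    (hx : x ∈ S.closedBall s r) : c • x ∈ S.closedBall s (|c| * r) := by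
  refine ⟨Submodule.smul_mem _ c hx.1, ?_⟩
  rw [S.N_smul s hs hs1 c x hx.1]
  exact mul_le_mul_of_nonneg_left hx.2 (abs_nonneg c)

theorem closedBall_mono (hrr' : r ≤ r') : S.closedBall s r ⊆ S.closedBall s r' :=
  fun _ hx => ⟨hx.1, hx.2.trans hrr'⟩

theorem convex_closedBall (hs : 0 < s) (hs1 : s < 1) : Convex ℝ (S.closedBall s r) := by
  intro x hx y hy a b ha hb hab
  refine ⟨add_mem (Submodule.smul_mem _ a hx.1) (Submodule.smul_mem _ b hy.1), ?_⟩
  calc S.N s (a • x + b • y) ≤ S.N s (a • x) + S.N s (b • y) :=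
        S.N_add_le s hs hs1 _ (Submodule.smul_mem _ a hx.1) _ (Submodule.smul_mem _ b hy.1)
    _ = a * S.N s x + b * S.N s y := by
        rw [S.N_smul s hs hs1 a x hx.1, S.N_smul s hs hs1 b y hy.1, abs_of_nonneg ha,
          abs_of_nonneg hb]
    _ ≤ a * r + b * r := by gcongr; exacts [hx.2, hy.2]
    _ = r := by rw [← add_mul, hab, one_mul]

theorem tendsto_of_tendsto_N (hs : 0 < s) (hs1 : s < 1) {w : ℕ → X} {l : X}
    (hw : ∀ k, w k - l ∈ S.E s) (hwl : Tendsto (fun k => S.N s (w k - l)) atTop (𝓝 0)) :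
    Tendsto w atTop (𝓝 l) :=
  tendsto_iff_norm_sub_tendsto_zero.2 <|
    squeeze_zero (fun _ => norm_nonneg _) (fun k => S.norm_le_N s hs hs1 _ (hw k)) hwl

theorem exists_subseq_tendsto (hs : 0 < s) (hss' : s < s') (hs' : s' < 1) {w : ℕ → X}
    (hw : ∀ k, w k ∈ S.closedBall s' r) :
    ∃ φ : ℕ → ℕ, StrictMono φ ∧ ∃ l ∈ S.E s, Tendsto (w ∘ φ) atTop (𝓝 l) ∧
      Tendsto (fun k => S.N s (w (φ k) - l)) atTop (𝓝 0) := by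
  obtain ⟨φ, hφ, l, hl, hwl⟩ :=
    S.exists_subseq_tendsto_N s s' hs hss' hs' w r (fun k => (hw k).1) (fun k => (hw k).2)
  refine ⟨φ, hφ, l, hl, S.tendsto_of_tendsto_N hs (hss'.trans hs') (fun k => ?_) hwl, hwl⟩
  exact sub_mem (S.E_anti s s' hs hss' hs' (hw (φ k)).1) hl

theorem closure_closedBall_subset (hs : 0 < s) (hss' : s < s') (hs' : s' < 1) :
    closure (S.closedBall s' r) ⊆ S.closedBall s r := by
  intro x hx
  obtain ⟨w, hw, hwx⟩ := mem_closure_iff_seq_limit.1 hx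
  obtain ⟨φ, hφ, l, hl, hwl, hNwl⟩ := S.exists_subseq_tendsto hs hss' hs' hw
  obtain rfl : l = x := tendsto_nhds_unique hwl (hwx.comp hφ.tendsto_atTop)
  have hs1 : s < 1 := hss'.trans hs'
  have hmem : ∀ k, w (φ k) ∈ S.E s := fun k => S.E_anti s s' hs hss' hs' (hw (φ k)).1
  refine ⟨hl, le_of_tendsto_of_tendsto' tendsto_const_nhds
    (by simpa using hNwl.add_const r) fun k => ?_⟩
  calc S.N s l ≤ S.N s (l - w (φ k)) + S.N s (w (φ k)) := by
        simpa using S.N_add_le s hs hs1 _ (sub_mem hl (hmem k)) _ (hmem k)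
    _ ≤ S.N s (w (φ k) - l) + r := by
        rw [S.N_sub_comm hs hs1 hl (hmem k)]
        gcongr
        exact (S.N_anti s s' hs hss' hs' _ (hw (φ k)).1).trans (hw (φ k)).2

theorem tendsto_N_of_tendsto (hs : 0 < s) (hss' : s < s') (hs' : s' < 1) {w : ℕ → X} {x : X}
    (hw : ∀ k, w k ∈ S.closedBall s' r) (hwx : Tendsto w atTop (𝓝 x)) :
    Tendsto (fun k => S.N s (w k - x)) atTop (𝓝 0) := by
  refine tendsto_of_subseq_tendsto fun ψ hψ => ?_
  obtain ⟨φ, hφ, l, -, hwl, hNwl⟩ := S.exists_subseq_tendsto hs hss' hs' fun k => hw (ψ k)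
  obtain rfl : l = x := tendsto_nhds_unique hwl (hwx.comp (hψ.comp hφ.tendsto_atTop))
  exact ⟨φ, hNwl⟩

theorem isCompact_closure_closedBall (hs : 0 < s) (hs1 : s < 1) :
    IsCompact (closure (S.closedBall s r)) := by
  refine IsSeqCompact.isCompact fun w hw => ?_
  have hw' : ∀ k, w k ∈ S.closedBall (s / 2) r := fun k =>
    S.closure_closedBall_subset (by positivity) (by linarith) hs1 (hw k)
  obtain ⟨φ, hφ, l, -, hwl, -⟩ := S.exists_subseq_tendsto (s := s / 4) (by positivity)
    (by linarith) (by linarith) hw'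
  exact ⟨l, isClosed_closure.mem_of_tendsto hwl (Eventually.of_forall fun k => hw (φ k)), φ,
    hφ, hwl⟩

theorem intervalIntegral_mem_closedBall [CompleteSpace X] (hs : 0 < s) (hss' : s < s')
    (hs' : s' < 1) {f : ℝ → X} {a b : ℝ} (hf : IntervalIntegrable f volume a b)
    (hfr : ∀ x ∈ Ι a b, f x ∈ S.closedBall s' r) :
    ∫ x in a..b, f x ∈ S.closedBall s (|b - a| * r) := by
  have hs1 : s < 1 := hss'.trans hs'
  rcases eq_or_ne a b with rfl | hab
  · simpa using S.zero_mem_closedBall hs hs1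
  have havg : ⨍ x in a..b, f x ∈ S.closedBall s r := by
    refine S.closure_closedBall_subset hs hss' hs' <|
      (S.convex_closedBall (hs.trans hss') hs').set_average_mem_closure ?_ ?_ ?_
        (intervalIntegrable_iff.1 hf)
    · simp [hab.symm, sub_eq_zero]
    · simp
    · exact (ae_restrict_mem measurableSet_uIoc).mono hfr
  have := S.smul_mem_closedBall hs hs1 (b - a) havg
  rwa [interval_average_eq, smul_inv_smul₀ (sub_ne_zero.2 hab.symm)] at this

end BanachScale

structure BanachScale.PeanoProblem {X : Type*} [NormedAddCommGroup X] [NormedSpace ℝ X]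
    (S : BanachScale X) where
  T : ℝ
  R : ℝ
  K : ℝ
  T_pos : 0 < T
  R_pos : 0 < R
  K_pos : 0 < K
  h : ℝ → X → X
  h_mem_E : ∀ s s' : ℝ, 0 < s → s < s' → s' < 1 → ∀ t ∈ Icc (0:ℝ) T, ∀ u ∈ S.E s', h t u ∈ S.E s
  tendsto_N_h : ∀ s s' : ℝ, 0 < s → s < s' → s' < 1 → ∀ t ∈ Icc (0:ℝ) T,
    ∀ u ∈ S.E s', ∀ (tk : ℕ → ℝ) (uk : ℕ → X),
      (∀ k, tk k ∈ Icc (0:ℝ) T) → (∀ k, uk k ∈ S.E s') →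
      Tendsto tk atTop (𝓝 t) →
      Tendsto (fun k => S.N s' (uk k - u)) atTop (𝓝 0) →
      Tendsto (fun k => S.N s (h (tk k) (uk k) - h t u)) atTop (𝓝 0)
  N_h_le : ∀ s s' : ℝ, 0 < s → s < s' → s' < 1 → ∀ t ∈ Icc (0:ℝ) T,
    ∀ u ∈ S.E s', S.N s' u ≤ R → S.N s (h t u) ≤ K

namespace BanachScale.PeanoProblem

variable {X : Type*} [NormedAddCommGroup X] [NormedSpace ℝ X] {S : BanachScale X}
  (P : S.PeanoProblem) {s : ℝ} {f u : ℝ → X} {t t' δ : ℝ}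

/-- The existence time `min T (R / K)`: in that time a solution moving at `E_s`-speed at most `K`
stays in the `R`-ball. -/
noncomputable def time : ℝ := min P.T (P.R / P.K)

theorem time_pos : 0 < P.time := lt_min P.T_pos (div_pos P.R_pos P.K_pos)

theorem time_le_T : P.time ≤ P.T := min_le_left _ _

theorem time_mul_K_le_R : P.time * P.K ≤ P.R :=
  (le_div_iff₀ P.K_pos).1 (min_le_right _ _)

def Admissible (f : ℝ → X) : Prop :=
  ∀ s, 0 < s → s < 1 → ∀ t ∈ Icc 0 P.time, f t ∈ S.closedBall s P.R ∧
    ∀ t' ∈ Icc 0 P.time, f t - f t' ∈ S.closedBall s (|t - t'| * P.K)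

namespace Admissible

variable {P}

theorem mem (hf : P.Admissible f) (hs : 0 < s) (hs1 : s < 1) (ht : t ∈ Icc 0 P.time) :
    f t ∈ S.closedBall s P.R :=
  (hf s hs hs1 t ht).1

theorem sub_mem (hf : P.Admissible f) (hs : 0 < s) (hs1 : s < 1) (ht : t ∈ Icc 0 P.time)
    (ht' : t' ∈ Icc 0 P.time) : f t - f t' ∈ S.closedBall s (|t - t'| * P.K) :=
  (hf s hs hs1 t ht).2 t' ht'

theorem field_mem (hf : P.Admissible f) (hs : 0 < s) (hs1 : s < 1) (ht : t ∈ Icc 0 P.time) :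
    P.h t (f t) ∈ S.closedBall s P.K := by
  have htT : t ∈ Icc 0 P.T := ⟨ht.1, ht.2.trans P.time_le_T⟩
  have hft := hf.mem (s := (s + 1) / 2) (by linarith) (by linarith) ht
  exact ⟨P.h_mem_E s _ hs (by linarith) (by linarith) t htT _ hft.1,
    P.N_h_le s _ hs (by linarith) (by linarith) t htT _ hft.1 hft.2⟩

theorem continuousOn_field (hf : P.Admissible f) :
    ContinuousOn (fun t => P.h t (f t)) (Icc 0 P.time) := by
  refine continuousOn_iff_continuous_domRestrict.2 <| continuous_iff_seqContinuous.2 ?_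
  intro tk t htk
  have htk' : Tendsto (fun k => (tk k : ℝ)) atTop (𝓝 t) :=
    (continuous_subtype_val.tendsto t).comp htk
  have hT : ∀ t : Icc 0 P.time, (t : ℝ) ∈ Icc 0 P.T := fun t => ⟨t.2.1, t.2.2.trans P.time_le_T⟩
  have hfN : Tendsto (fun k => S.N (3 / 4) (f (tk k) - f t)) atTop (𝓝 0) := by
    refine squeeze_zero (fun k => S.N_nonneg (by norm_num) (by norm_num)
      (hf.sub_mem (by norm_num) (by norm_num) (tk k).2 t.2).1)
      (fun k => (hf.sub_mem (by norm_num) (by norm_num) (tk k).2 t.2).2) ?_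
    simpa using ((htk'.sub_const (t : ℝ)).abs.mul_const P.K)
  refine S.tendsto_of_tendsto_N (s := 1 / 2) (by norm_num) (by norm_num)
    (fun k => Submodule.sub_mem _ (hf.field_mem (by norm_num) (by norm_num) (tk k).2).1
      (hf.field_mem (by norm_num) (by norm_num) t.2).1) ?_
  exact P.tendsto_N_h _ _ (by norm_num) (by norm_num) (by norm_num) t (hT t) _
    (hf.mem (by norm_num) (by norm_num) t.2).1 _ _ (fun k => hT (tk k))
    (fun k => (hf.mem (by norm_num) (by norm_num) (tk k).2).1) htk' hfN

theorem norm_field_le (hf : P.Admissible f) (ht : t ∈ Icc 0 P.time) : ‖P.h t (f t)‖ ≤ P.K :=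
  have hft := hf.field_mem (s := 1 / 2) (by norm_num) (by norm_num) ht
  (S.norm_le_N _ (by norm_num) (by norm_num) _ hft.1).trans hft.2

theorem intervalIntegrable_field (hf : P.Admissible f) {a b : ℝ} (ha : a ∈ Icc 0 P.time)
    (hb : b ∈ Icc 0 P.time) : IntervalIntegrable (fun t => P.h t (f t)) volume a b :=
  (hf.continuousOn_field.mono (uIcc_subset_Icc ha hb)).intervalIntegrable

theorem integral_field_mem [CompleteSpace X] (hf : P.Admissible f) (hs : 0 < s) (hs1 : s < 1)
    {a b : ℝ} (ha : a ∈ Icc 0 P.time) (hb : b ∈ Icc 0 P.time) :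
    ∫ t in a..b, P.h t (f t) ∈ S.closedBall s (|b - a| * P.K) :=
  S.intervalIntegral_mem_closedBall hs (s' := (s + 1) / 2) (by linarith) (by linarith)
    (hf.intervalIntegrable_field ha hb) fun _ ht =>
      hf.field_mem (by linarith) (by linarith) (uIcc_subset_Icc ha hb (uIoc_subset_uIcc ht))

theorem norm_sub_le (hf : P.Admissible f) (ht : t ∈ Icc 0 P.time) (ht' : t' ∈ Icc 0 P.time) :
    ‖f t - f t'‖ ≤ |t - t'| * P.K :=
  have hft := hf.sub_mem (s := 1 / 2) (by norm_num) (by norm_num) ht ht'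
  (S.norm_le_N _ (by norm_num) (by norm_num) _ hft.1).trans hft.2

theorem of_tendsto {F : ℕ → ℝ → X} (hF : ∀ k, P.Admissible (F k))
    (hFu : ∀ t ∈ Icc 0 P.time, Tendsto (fun k => F k t) atTop (𝓝 (u t))) : P.Admissible u := by
  intro s hs hs1 t ht
  have hclosure : ∀ r, closure (S.closedBall ((s + 1) / 2) r) ⊆ S.closedBall s r := fun _ =>
    S.closure_closedBall_subset hs (by linarith) (by linarith)
  refine ⟨hclosure _ <| mem_closure_of_tendsto (hFu t ht) <| Eventually.of_forall fun k =>
    (hF k).mem (by linarith) (by linarith) ht, fun t' ht' => hclosure _ ?_⟩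
  exact mem_closure_of_tendsto ((hFu t ht).sub (hFu t' ht')) <| Eventually.of_forall fun k =>
    (hF k).sub_mem (by linarith) (by linarith) ht ht'

end Admissible

theorem tendsto_field {F : ℕ → ℝ → X} (hF : ∀ k, P.Admissible (F k)) (hu : P.Admissible u)
    (ht : t ∈ Icc 0 P.time) (hFu : Tendsto (fun k => F k t) atTop (𝓝 (u t))) :
    Tendsto (fun k => P.h t (F k t)) atTop (𝓝 (P.h t (u t))) := by
  have htT : t ∈ Icc 0 P.T := ⟨ht.1, ht.2.trans P.time_le_T⟩
  refine S.tendsto_of_tendsto_N (s := 1 / 2) (by norm_num) (by norm_num)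
    (fun k => Submodule.sub_mem _ ((hF k).field_mem (by norm_num) (by norm_num) ht).1
      (hu.field_mem (by norm_num) (by norm_num) ht).1) ?_
  exact P.tendsto_N_h (1 / 2) (3 / 4) (by norm_num) (by norm_num) (by norm_num) t htT (u t)
    (hu.mem (by norm_num) (by norm_num) ht).1 (fun _ => t) (fun k => F k t) (fun _ => htT)
    (fun k => ((hF k).mem (by norm_num) (by norm_num) ht).1) tendsto_const_nhds
    (S.tendsto_N_of_tendsto (s' := 7 / 8) (by norm_num) (by norm_num) (by norm_num)
      (fun k => (hF k).mem (by norm_num) (by norm_num) ht) hFu)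

theorem tendsto_integral_field {F : ℕ → ℝ → X} (hF : ∀ k, P.Admissible (F k))
    (hu : P.Admissible u) (hFu : ∀ t ∈ Icc 0 P.time, Tendsto (fun k => F k t) atTop (𝓝 (u t)))
    (ht : t ∈ Icc 0 P.time) :
    Tendsto (fun k => ∫ ξ in 0..t, P.h ξ (F k ξ)) atTop (𝓝 (∫ ξ in 0..t, P.h ξ (u ξ))) := by
  have h0 : (0:ℝ) ∈ Icc 0 P.time := left_mem_Icc.2 P.time_pos.le
  have hsub : ∀ ξ ∈ Ι 0 t, ξ ∈ Icc 0 P.time := fun ξ hξ =>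
    uIcc_subset_Icc h0 ht (uIoc_subset_uIcc hξ)
  refine tendsto_integral_filter_of_dominated_convergence (fun _ => P.K)
    (Eventually.of_forall fun k =>
      ((hF k).intervalIntegrable_field h0 ht).def'.aestronglyMeasurable)
    (Eventually.of_forall fun k => ae_of_all _ fun ξ hξ => (hF k).norm_field_le (hsub ξ hξ))
    intervalIntegrable_const (ae_of_all _ fun ξ hξ => ?_)
  exact P.tendsto_field hF hu (hsub ξ hξ) (hFu ξ (hsub ξ hξ))

noncomputable def delay (δ t : ℝ) : ℝ := projIcc 0 P.time P.time_pos.le (t - δ)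

theorem delay_mem : P.delay δ t ∈ Icc 0 P.time := Subtype.prop _

theorem delay_le_max : P.delay δ t ≤ max 0 (t - δ) :=
  max_le_max le_rfl (min_le_right _ _)

theorem abs_delay_sub_delay_le : |P.delay δ t - P.delay δ t'| ≤ |t - t'| :=
  (abs_projIcc_sub_projIcc P.time_pos.le).trans_eq (by rw [sub_sub_sub_cancel_right])

theorem abs_sub_delay_le (ht : t ∈ Icc 0 P.time) (hδ : 0 ≤ δ) : |t - P.delay δ t| ≤ δ := by
  have hmin : min P.time (t - δ) = t - δ := min_eq_right (by linarith [ht.2])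
  simp only [delay, coe_projIcc, hmin]
  have hmax : max 0 (t - δ) ≤ t + δ := max_le (by linarith [ht.1]) (by linarith)
  exact abs_le.2 ⟨by linarith, by linarith [le_max_right 0 (t - δ)]⟩

noncomputable def tonelliStep (δ : ℝ) (f : ℝ → X) (t : ℝ) : X :=
  ∫ ξ in 0..P.delay δ t, P.h ξ (f ξ)

theorem admissible_zero : P.Admissible 0 := fun s hs hs1 _ _ =>
  ⟨S.closedBall_mono P.R_pos.le (S.zero_mem_closedBall hs hs1), fun _ _ => by
    simpa using S.closedBall_mono (mul_nonneg (abs_nonneg _) P.K_pos.le)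
      (S.zero_mem_closedBall hs hs1)⟩

/-- Since `tonelliStep δ` only looks `δ` into the past, successive iterates from `0` agree on an
interval growing by `δ` at each step. -/
theorem iterate_tonelliStep_succ_apply (hδ : 0 < δ) (j : ℕ) (ht : t ≤ (j + 1) * δ) :
    (P.tonelliStep δ)^[j + 1] 0 t = (P.tonelliStep δ)^[j] 0 t := by
  induction j generalizing t with
  | zero =>
    have : P.delay δ t = 0 := le_antisymm
      (P.delay_le_max.trans (max_le le_rfl (by simp only [Nat.cast_zero] at ht; linarith)))
      P.delay_mem.1
    simp [tonelliStep, this]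
  | succ j ih =>
    rw [Function.iterate_succ_apply']
    conv_rhs => rw [Function.iterate_succ_apply']
    refine integral_congr fun ξ hξ => congrArg (P.h ξ) (ih ?_)
    rw [uIcc_of_le P.delay_mem.1] at hξ
    push_cast at ht
    have hmax : max 0 (t - δ) ≤ (j + 1) * δ := max_le (by positivity) (by linarith)
    exact hξ.2.trans (P.delay_le_max.trans hmax)

noncomputable def tonelli (n : ℕ) : ℝ → X := (P.tonelliStep (P.time / (n + 1)))^[n + 1] 0

theorem tonelli_eq (n : ℕ) (t : ℝ) :
    P.tonelli n t = P.tonelliStep (P.time / (n + 1)) (P.tonelli n) t := by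
  have hδ : 0 < P.time / (n + 1) := div_pos P.time_pos (by positivity)
  calc P.tonelli n t
      = P.tonelliStep (P.time / (n + 1)) ((P.tonelliStep (P.time / (n + 1)))^[n] 0) t := by
        rw [tonelli, Function.iterate_succ_apply']
    _ = _ := integral_congr fun ξ hξ => congrArg (P.h ξ) <| by
      rw [uIcc_of_le P.delay_mem.1] at hξ
      refine (P.iterate_tonelliStep_succ_apply hδ n ?_).symm
      rw [mul_div_cancel₀ _ (by positivity)]
      exact hξ.2.trans P.delay_mem.2

theorem tonelli_zero (n : ℕ) : P.tonelli n 0 = 0 := by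
  have hδ : 0 < P.time / (n + 1) := div_pos P.time_pos (by positivity)
  have : P.delay (P.time / (n + 1)) 0 = 0 :=
    le_antisymm (P.delay_le_max.trans (max_le le_rfl (by linarith))) P.delay_mem.1
  rw [tonelli_eq, tonelliStep, this, integral_same]

variable [CompleteSpace X]

variable {P} in
theorem Admissible.tonelliStep (hf : P.Admissible f) (δ : ℝ) :
    P.Admissible (P.tonelliStep δ f) := by
  intro s hs hs1 t _
  have h0 : (0:ℝ) ∈ Icc 0 P.time := left_mem_Icc.2 P.time_pos.le
  refine ⟨S.closedBall_mono ?_ (hf.integral_field_mem hs hs1 h0 P.delay_mem), fun t' _ => ?_⟩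
  · rw [sub_zero, abs_of_nonneg P.delay_mem.1]
    exact (mul_le_mul_of_nonneg_right P.delay_mem.2 P.K_pos.le).trans P.time_mul_K_le_R
  · rw [PeanoProblem.tonelliStep, PeanoProblem.tonelliStep, integral_interval_sub_left
      (hf.intervalIntegrable_field h0 P.delay_mem) (hf.intervalIntegrable_field h0 P.delay_mem)]
    exact S.closedBall_mono (mul_le_mul_of_nonneg_right P.abs_delay_sub_delay_le P.K_pos.le)
      (hf.integral_field_mem hs hs1 P.delay_mem P.delay_mem)

theorem admissible_tonelli (n : ℕ) : P.Admissible (P.tonelli n) := by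
  rw [tonelli]
  induction n + 1 with
  | zero => exact P.admissible_zero
  | succ m ih => rw [Function.iterate_succ', Function.comp_apply]; exact ih.tonelliStep _

theorem norm_tonelli_sub_integral_le (n : ℕ) (ht : t ∈ Icc 0 P.time) :
    ‖P.tonelli n t - ∫ ξ in 0..t, P.h ξ (P.tonelli n ξ)‖ ≤ P.time / (n + 1) * P.K := by
  have hf := P.admissible_tonelli n
  have h0 : (0:ℝ) ∈ Icc 0 P.time := left_mem_Icc.2 P.time_pos.le
  have hδ : 0 ≤ P.time / (n + 1) := by have := P.time_pos; positivity
  set δ := P.time / (n + 1)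
  rw [P.tonelli_eq n t, tonelliStep, integral_interval_sub_left
    (hf.intervalIntegrable_field h0 P.delay_mem) (hf.intervalIntegrable_field h0 ht)]
  have hmem : ∫ ξ in t..P.delay δ t, P.h ξ (P.tonelli n ξ) ∈
      S.closedBall (1 / 2) (|P.delay δ t - t| * P.K) :=
    hf.integral_field_mem (by norm_num) (by norm_num) ht P.delay_mem
  calc _ ≤ S.N (1 / 2) _ := S.norm_le_N _ (by norm_num) (by norm_num) _ hmem.1
    _ ≤ |P.delay δ t - t| * P.K := hmem.2
    _ ≤ δ * P.K := by
      rw [abs_sub_comm]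
      exact mul_le_mul_of_nonneg_right (P.abs_sub_delay_le ht hδ) P.K_pos.le

theorem exists_solution : ∃ u : ℝ → X, u 0 = 0 ∧ P.Admissible u ∧
    ∀ t ∈ Icc 0 P.time, u t = ∫ ξ in 0..t, P.h ξ (u ξ) := by
  have h0 : (0:ℝ) ∈ Icc 0 P.time := left_mem_Icc.2 P.time_pos.le
  have hequi : Equicontinuous fun n (t : Icc 0 P.time) => P.tonelli n t :=
    (LipschitzWith.uniformEquicontinuous _ (Real.toNNReal P.K) fun n =>
      LipschitzWith.of_dist_le_mul fun t t' => by
        rw [Real.coe_toNNReal _ P.K_pos.le, dist_eq_norm, Subtype.dist_eq, Real.dist_eq, mul_comm]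
        exact (P.admissible_tonelli n).norm_sub_le t.2 t'.2).equicontinuous
  obtain ⟨φ, hφ, g, hg⟩ := exists_subseq_tendsto_of_equicontinuous
    (S.isCompact_closure_closedBall (s := 1 / 2) (r := P.R) (by norm_num) (by norm_num)) hequi
    fun n t => subset_closure ((P.admissible_tonelli n).mem (by norm_num) (by norm_num) t.2)
  set u := IccExtend P.time_pos.le g
  have hu : ∀ t ∈ Icc 0 P.time, Tendsto (fun k => P.tonelli (φ k) t) atTop (𝓝 (u t)) :=
    fun t ht => by simpa [u, IccExtend_of_mem _ g ht] using hg ⟨t, ht⟩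
  have hadm : P.Admissible u := Admissible.of_tendsto (fun k => P.admissible_tonelli (φ k)) hu
  refine ⟨u, tendsto_nhds_unique (hu 0 h0) (by simp [P.tonelli_zero]), hadm, fun t ht => ?_⟩
  refine tendsto_nhds_unique (hu t ht) ?_
  have herr : Tendsto (fun k => P.tonelli (φ k) t - ∫ ξ in 0..t, P.h ξ (P.tonelli (φ k) ξ))
      atTop (𝓝 0) := by
    refine squeeze_zero_norm (fun k => P.norm_tonelli_sub_integral_le (φ k) ht) ?_
    simpa [div_eq_mul_inv] using ((tendsto_one_div_add_atTop_nhds_zero_nat.comp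
      hφ.tendsto_atTop).const_mul P.time).mul_const P.K
  simpa using herr.add (P.tendsto_integral_field (fun k => P.admissible_tonelli (φ k)) hadm hu ht)

end BanachScale.PeanoProblem

theorem peano_on_banach_scale_general
    {X : Type*} [NormedAddCommGroup X] [NormedSpace ℝ X] [CompleteSpace X]
    (E : ℝ → Submodule ℝ X) (N : ℝ → X → ℝ)
    -- the scale structure
    (hscale_mono : ∀ s s' : ℝ, 0 < s → s < s' → s' < 1 → E s' ≤ E s)
    (hnorm_mono : ∀ s s' : ℝ, 0 < s → s < s' → s' < 1 → ∀ x ∈ E s', N s x ≤ N s' x)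
    (hN_add : ∀ s : ℝ, 0 < s → s < 1 → ∀ x ∈ E s, ∀ y ∈ E s,
      N s (x + y) ≤ N s x + N s y)
    (hN_smul : ∀ s : ℝ, 0 < s → s < 1 → ∀ (c : ℝ), ∀ x ∈ E s, N s (c • x) = |c| * N s x)
    (hN_ambient : ∀ s : ℝ, 0 < s → s < 1 → ∀ x ∈ E s, ‖x‖ ≤ N s x)
    (hcompact : ∀ s s' : ℝ, 0 < s → s < s' → s' < 1 → ∀ (u : ℕ → X) (C : ℝ),
      (∀ k, u k ∈ E s') → (∀ k, N s' (u k) ≤ C) →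
      ∃ φ : ℕ → ℕ, StrictMono φ ∧ ∃ l ∈ E s,
        Tendsto (fun k => N s (u (φ k) - l)) atTop (𝓝 0))
    -- the data of the problem
    (T R K : ℝ) (hT : 0 < T) (hR : 0 < R) (hK : 0 < K)
    (h : ℝ → X → X)
    (hmaps : ∀ s s' : ℝ, 0 < s → s < s' → s' < 1 → ∀ t ∈ Icc (0:ℝ) T,
      ∀ u ∈ E s', h t u ∈ E s)
    (hconth : ∀ s s' : ℝ, 0 < s → s < s' → s' < 1 → ∀ t ∈ Icc (0:ℝ) T,
      ∀ u ∈ E s', ∀ (tk : ℕ → ℝ) (uk : ℕ → X),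
        (∀ k, tk k ∈ Icc (0:ℝ) T) → (∀ k, uk k ∈ E s') →
        Tendsto tk atTop (𝓝 t) →
        Tendsto (fun k => N s' (uk k - u)) atTop (𝓝 0) →
        Tendsto (fun k => N s (h (tk k) (uk k) - h t u)) atTop (𝓝 0))
    (hboundh : ∀ s s' : ℝ, 0 < s → s < s' → s' < 1 → ∀ t ∈ Icc (0:ℝ) T,
      ∀ u ∈ E s', N s' u ≤ R → N s (h t u) ≤ K) :
    ∃ a > (0:ℝ), ∃ u : ℝ → X, u 0 = 0 ∧
      ∀ τ s : ℝ, 0 < τ → τ ≤ T → 0 < s → s < 1 → 1 - s - τ * a > 0 →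
        (∀ t ∈ Icc (0:ℝ) τ, u t ∈ E s ∧ N s (u t) ≤ R) ∧
        (∀ t ∈ Icc (0:ℝ) τ, ∀ ε > (0:ℝ), ∃ δ > (0:ℝ), ∀ t' ∈ Icc (0:ℝ) τ,
          |t' - t| < δ → N s (u t' - u t) < ε) ∧
        (∀ t ∈ Icc (0:ℝ) τ,
          IntervalIntegrable (fun ξ => h ξ (u ξ)) volume 0 t ∧
          u t = ∫ ξ in (0:ℝ)..t, h ξ (u ξ)) := by
  let S : BanachScale X := ⟨E, N, hscale_mono, hnorm_mono, hN_add, hN_smul, hN_ambient, hcompact⟩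
  let P : S.PeanoProblem := ⟨T, R, K, hT, hR, hK, h, hmaps, hconth, hboundh⟩
  obtain ⟨u, hu0, hadm, hint⟩ := P.exists_solution
  refine ⟨1 / P.time, one_div_pos.2 P.time_pos, u, hu0, fun τ s _ _ hs hs1 hτs => ?_⟩
  have hτ : Icc 0 τ ⊆ Icc 0 P.time := Icc_subset_Icc_right <| by
    have := P.time_pos
    rw [mul_one_div] at hτs
    linarith [(div_lt_one this).1 (by linarith : τ / P.time < 1)]
  refine ⟨fun t ht => hadm.mem hs hs1 (hτ ht), fun t ht ε hε => ⟨ε / K, div_pos hε hK,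
    fun t' ht' htt' => ?_⟩, fun t ht => ⟨hadm.intervalIntegrable_field
      (left_mem_Icc.2 P.time_pos.le) (hτ ht), hint t (hτ ht)⟩⟩
  calc N s (u t' - u t) ≤ |t' - t| * K := (hadm.sub_mem hs hs1 (hτ ht') (hτ ht)).2
    _ < ε / K * K := by gcongr
    _ = ε := div_mul_cancel₀ _ hK.ne'

/-- **Peano existence theorem on a scale of Banach spaces** (the special case `A ≡ 0`
of the abstract Cauchy–Kowalewski theorem).

The scale `{(E_s, ‖·‖_s)}_{0<s<1}` is modeled inside an ambient Banach space `X`: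
`E s` is a submodule of `X` and `N s` its norm, with `E_{s'} ⊆ E_s`, `N s ≤ N s'`
for `0 < s < s' < 1`, each `(E_s, N s)` complete, each embedding `E_{s'} ↪ E_s`
compact, and the ambient norm dominated by the scale norms.

The mapping `h : [0,T] × E_{s'} → E_s` is (sequentially) continuous and satisfies
`‖h(t,u)‖_s ≤ K` on the closed `R`-ball.

Conclusion: there is a (large) constant `a > 0` and a solution of `u_t = h(t,u)`,
`u(0) = 0`, continuous on `[0,τ]` with values in the closed `R`-ball of `E_s` and
satisfying `u(t) = ∫₀ᵗ h(ξ,u(ξ)) dξ` for every `(τ,s)` with `τ > 0`, `τ ≤ T`,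
`0 < s < 1`, `1 - s - τa > 0` and `t ∈ [0,τ]`. -/
theorem peano_on_banach_scale
    {X : Type*} [NormedAddCommGroup X] [NormedSpace ℝ X] [CompleteSpace X]
    (E : ℝ → Submodule ℝ X) (N : ℝ → X → ℝ)
    -- the scale structure
    (hscale_mono : ∀ s s' : ℝ, 0 < s → s < s' → s' < 1 → E s' ≤ E s)
    (hnorm_mono : ∀ s s' : ℝ, 0 < s → s < s' → s' < 1 → ∀ x ∈ E s', N s x ≤ N s' x)
    (hN_nonneg : ∀ s : ℝ, 0 < s → s < 1 → ∀ x ∈ E s, 0 ≤ N s x)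
    (hN_def : ∀ s : ℝ, 0 < s → s < 1 → ∀ x ∈ E s, (N s x = 0 ↔ x = 0))
    (hN_add : ∀ s : ℝ, 0 < s → s < 1 → ∀ x ∈ E s, ∀ y ∈ E s,
      N s (x + y) ≤ N s x + N s y)
    (hN_smul : ∀ s : ℝ, 0 < s → s < 1 → ∀ (c : ℝ), ∀ x ∈ E s, N s (c • x) = |c| * N s x)
    (hN_ambient : ∀ s : ℝ, 0 < s → s < 1 → ∀ x ∈ E s, ‖x‖ ≤ N s x)
    (hcomplete : ∀ s : ℝ, 0 < s → s < 1 → ∀ u : ℕ → X, (∀ k, u k ∈ E s) →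
      (∀ ε > (0:ℝ), ∃ K₀ : ℕ, ∀ m ≥ K₀, ∀ n ≥ K₀, N s (u m - u n) < ε) →
      ∃ l ∈ E s, Tendsto (fun k => N s (u k - l)) atTop (𝓝 0))
    (hcompact : ∀ s s' : ℝ, 0 < s → s < s' → s' < 1 → ∀ (u : ℕ → X) (C : ℝ),
      (∀ k, u k ∈ E s') → (∀ k, N s' (u k) ≤ C) →
      ∃ φ : ℕ → ℕ, StrictMono φ ∧ ∃ l ∈ E s,
        Tendsto (fun k => N s (u (φ k) - l)) atTop (𝓝 0))
    -- the data of the problem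
    (T R K : ℝ) (hT : 0 < T) (hR : 0 < R) (hK : 0 < K)
    (h : ℝ → X → X)
    (hmaps : ∀ s s' : ℝ, 0 < s → s < s' → s' < 1 → ∀ t ∈ Icc (0:ℝ) T,
      ∀ u ∈ E s', h t u ∈ E s)
    (hconth : ∀ s s' : ℝ, 0 < s → s < s' → s' < 1 → ∀ t ∈ Icc (0:ℝ) T,
      ∀ u ∈ E s', ∀ (tk : ℕ → ℝ) (uk : ℕ → X),
        (∀ k, tk k ∈ Icc (0:ℝ) T) → (∀ k, uk k ∈ E s') →
        Tendsto tk atTop (𝓝 t) →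
        Tendsto (fun k => N s' (uk k - u)) atTop (𝓝 0) →
        Tendsto (fun k => N s (h (tk k) (uk k) - h t u)) atTop (𝓝 0))
    (hboundh : ∀ s s' : ℝ, 0 < s → s < s' → s' < 1 → ∀ t ∈ Icc (0:ℝ) T,
      ∀ u ∈ E s', N s' u ≤ R → N s (h t u) ≤ K) :
    ∃ a > (0:ℝ), ∃ u : ℝ → X, u 0 = 0 ∧
      ∀ τ s : ℝ, 0 < τ → τ ≤ T → 0 < s → s < 1 → 1 - s - τ * a > 0 →
        (∀ t ∈ Icc (0:ℝ) τ, u t ∈ E s ∧ N s (u t) ≤ R) ∧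
        (∀ t ∈ Icc (0:ℝ) τ, ∀ ε > (0:ℝ), ∃ δ > (0:ℝ), ∀ t' ∈ Icc (0:ℝ) τ,
          |t' - t| < δ → N s (u t' - u t) < ε) ∧
        (∀ t ∈ Icc (0:ℝ) τ,
          IntervalIntegrable (fun ξ => h ξ (u ξ)) volume 0 t ∧
          u t = ∫ ξ in (0:ℝ)..t, h ξ (u ξ)) :=
  peano_on_banach_scale_general E N hscale_mono hnorm_mono hN_add hN_smul hN_ambient hcompact T R K
    hT hR hK h hmaps hconth hboundh
end
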